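/- Let C be an abelian category. Suppose 0 → A → B —p→ M → 0 is a short exact sequence in which p is right almost split and End(A) is a local ring. Then the monomorphism a: A → B is left almost split, i.e., the sequence is an almost split (Auslander–Reiten) sequence. -/
import Mathlib


open CategoryTheory CategoryTheory.Limits

universe v u

/-- `p : B ⟶ M` is right almost split. -/
def IsRightAlmostSplit {C : Type u} [Category.{v} C] {B M : C} (p : B ⟶ M) : Prop :=
  (¬ ∃ s : M ⟶ B, s ≫ p = 𝟙 M) ∧
    ∀ ⦃X : C⦄ (t : X ⟶ M), (¬ ∃ s : M ⟶ X, s ≫ t = 𝟙 M) → ∃ u : X ⟶ B, u ≫ p = t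

/-- `i : A ⟶ B` is left almost split. -/
def IsLeftAlmostSplit {C : Type u} [Category.{v} C] {A B : C} (i : A ⟶ B) : Prop :=
  (¬ ∃ r : B ⟶ A, i ≫ r = 𝟙 A) ∧
    ∀ ⦃Y : C⦄ (u : A ⟶ Y), (¬ ∃ r : Y ⟶ A, u ≫ r = 𝟙 A) → ∃ v : B ⟶ Y, i ≫ v = u

/-- Let `0 → A →i B →p M → 0` be a short exact sequence in an abelian
category in which `p` is right almost split and `End(A)` is a local ring.  Then `i` is left
almost split, i.e. the sequence is an almost split (Auslander–Reiten) sequence. -/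
theorem stmt12 {C : Type u} [Category.{v} C] [Abelian C]
    {A B M : C} (i : A ⟶ B) (p : B ⟶ M) (w : i ≫ p = 0)
    (hse : (ShortComplex.mk i p w).ShortExact)
    (hras : IsRightAlmostSplit p)
    (hA : IsLocalRing (End A)) :
    IsLeftAlmostSplit i := by
  haveI := hse.mono_f
  haveI := hse.epi_g
  have hker := hse.fIsKernel
  have hcoker := hse.gIsCokernel
  -- Part 1: `i` is not a split monomorphism.
  have h1 : ¬ ∃ r : B ⟶ A, i ≫ r = 𝟙 A := by
    rintro ⟨r, hr⟩
    apply hras.1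
    have hie : i ≫ (𝟙 B - r ≫ i) = 0 := by
      simp only [Preadditive.comp_sub, Category.comp_id, ← Category.assoc, hr,
        Category.id_comp, sub_self]
    obtain ⟨d, hd⟩ := CokernelCofork.IsColimit.desc' hcoker (𝟙 B - r ≫ i) hie
    refine ⟨d, ?_⟩
    rw [← cancel_epi p, ← Category.assoc]
    simp only [CokernelCofork.π_ofπ, Cofork.π_ofπ] at hd
    rw [hd]
    simp [Preadditive.sub_comp, Category.assoc, w]
  refine ⟨h1, ?_⟩
  intro Y u hu
  by_contra hv
  -- the pushout of `i` along `u`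
  set g : B ⟶ pushout i u := pushout.inl i u with hg
  set j : Y ⟶ pushout i u := pushout.inr i u with hj
  have hsq : i ≫ g = u ≫ j := pushout.condition
  have hq0 : i ≫ p = u ≫ 0 := by rw [w, Limits.comp_zero]
  set q : pushout i u ⟶ M := pushout.desc p 0 hq0 with hq
  have hgq : g ≫ q = p := pushout.inl_desc _ _ _
  have hjq : j ≫ q = 0 := pushout.inr_desc _ _ _
  haveI : Epi q := epi_of_epi_fac hgq
  haveI : Mono j := by
    rw [hj]; infer_instance
  -- `q` is a cokernel of `j`
  have hqcoker : IsColimit (CokernelCofork.ofπ q hjq) := by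
    refine CokernelCofork.IsColimit.ofπ' q hjq (fun {Z} z hz => ?_)
    have hiz : i ≫ (g ≫ z) = 0 := by
      rw [← Category.assoc, hsq, Category.assoc, hz, Limits.comp_zero]
    obtain ⟨l, hl⟩ := CokernelCofork.IsColimit.desc' hcoker (g ≫ z) hiz
    simp only [CokernelCofork.π_ofπ, Cofork.π_ofπ] at hl
    refine ⟨l, ?_⟩
    apply pushout.hom_ext
    · rw [← Category.assoc, hgq, hl]
    · rw [← Category.assoc, hjq, Limits.zero_comp, hz]
  -- the pushout sequence is short exact
  have hqse : (ShortComplex.mk j q hjq).ShortExact :=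
    { exact := ShortComplex.exact_of_g_is_cokernel _ hqcoker }
  have hjker := hqse.fIsKernel
  -- `q` is not a split epimorphism (otherwise `u` would factor through `i`)
  have hqns : ¬ ∃ s : M ⟶ pushout i u, s ≫ q = 𝟙 M := by
    rintro ⟨σ, hσ⟩
    apply hv
    have hφ : (𝟙 (pushout i u) - q ≫ σ) ≫ q = 0 := by
      simp only [Preadditive.sub_comp, Category.id_comp, Category.assoc, hσ,
        Category.comp_id, sub_self]
    obtain ⟨t, ht⟩ := KernelFork.IsLimit.lift' hjker (𝟙 (pushout i u) - q ≫ σ) hφ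
    simp only [Fork.ι_ofι] at ht
    have hjt : j ≫ t = 𝟙 Y := by
      rw [← cancel_mono j, Category.assoc, ht, Category.id_comp]
      simp only [Preadditive.comp_sub, Category.comp_id, ← Category.assoc, hjq,
        Limits.zero_comp, sub_zero]
    exact ⟨g ≫ t, by rw [← Category.assoc, hsq, Category.assoc, hjt, Category.comp_id]⟩
  -- factor `q` through `p` using right almost splitness
  obtain ⟨h, hh⟩ := hras.2 q hqns
  -- factor `j ≫ h` and `𝟙 B - g ≫ h` through the kernel `i`
  have hjh : (j ≫ h) ≫ p = 0 := by rw [Category.assoc, hh, hjq]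
  obtain ⟨k₀, hk₀⟩ := KernelFork.IsLimit.lift' hker (j ≫ h) hjh
  let k : Y ⟶ A := k₀
  have hk : k ≫ i = j ≫ h := hk₀
  have hgh : (𝟙 B - g ≫ h) ≫ p = 0 := by
    simp only [Preadditive.sub_comp, Category.id_comp, Category.assoc, hh, hgq, sub_self]
  obtain ⟨t₀, ht₀⟩ := KernelFork.IsLimit.lift' hker (𝟙 B - g ≫ h) hgh
  let t' : B ⟶ A := t₀
  have ht' : t' ≫ i = 𝟙 B - g ≫ h := ht₀
  -- the key identity : `u ≫ k + i ≫ t' = 𝟙 A`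
  have key : u ≫ k + i ≫ t' = 𝟙 A := by
    rw [← cancel_mono i, Preadditive.add_comp, Category.assoc, hk, Category.assoc, ht']
    rw [Category.id_comp, ← Category.assoc, ← hsq, Category.assoc]
    simp only [Preadditive.comp_sub, Category.comp_id]
    abel
  have key' : End.of (u ≫ k) + End.of (i ≫ t') = 1 := key
  rcases hA.isUnit_or_isUnit_of_add_one key' with hs | he
  · -- `u ≫ k` is a unit : then `u` is a split mono, contradiction
    obtain ⟨s, hs⟩ := hs
    apply hu
    refine ⟨k ≫ (↑s⁻¹ : End A), ?_⟩
    have : (End.of (u ≫ k)) ≫ (↑s⁻¹ : End A) = 𝟙 A := by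
      change (↑s⁻¹ : End A) * (End.of (u ≫ k)) = 1
      rw [← hs, Units.inv_mul]
    rw [← Category.assoc]
    exact this
  · -- `i ≫ t'` is a unit : then `i` is a split mono, contradiction
    obtain ⟨e, he⟩ := he
    apply h1
    refine ⟨t' ≫ (↑e⁻¹ : End A), ?_⟩
    have : (End.of (i ≫ t')) ≫ (↑e⁻¹ : End A) = 𝟙 A := by
      change (↑e⁻¹ : End A) * (End.of (i ≫ t')) = 1
      rw [← he, Units.inv_mul]
    rw [← Category.assoc]
    exact this
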